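/- Let D be a strong generalized sum of two vertex-disjoint digraphs D₁, D₂ each containing a Hamiltonian cycle (C₁ and C₂ respectively). If D contains no good pair of arcs between C₁ and C₂, then D is vertex-pancyclic: for every vertex v of D and every k with 3 ≤ k ≤ |V(D)|, D contains a directed cycle of length k through v. -/

import Mathlib

/-!
No good pair means that an arc `x s → y r` forces the arc `x (s + 1) → y (r - 1)`. Iterating
along the orbit of `(1, -1)` in `ZMod n × ZMod m` (Chinese remainder theorem), the direction of
the arc between `x s` and `y r` depends only on `s + r` modulo `g = gcd n m`, through a predicate
`f` on `ZMod g`; strong connectivity makes `f` non-constant, so it has a fall `c`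
(`f c`, `¬ f (c + 1)`) and a rise `d` (`¬ f d`, `f (d + 1)`).

A cycle through `x s` made of `a + 1` consecutive vertices of `C₁` followed by `b + 1`
consecutive vertices of `C₂` then exists whenever `b ≡ a ± 1 (mod g)`: place the arc into `C₂`
at the fall, or the arc back into `C₁` at the rise. A cycle entering `C₂` twice, with `a + 2`
vertices on `C₁` and `b + 2` on `C₂`, exists whenever `a ≡ b (mod g)`, by crossing at both the
fall and the rise. Every length `3 ≤ k ≤ n + m` has one of these two forms, and vertices of `C₂`
are handled by exchanging the two cycles.
-/

/-- A directed cycle of length `k` passing through `v` in the digraph with arc relation `A`. -/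
def CycleThru {V : Type*} (A : V → V → Prop) (k : ℕ) (v : V) : Prop :=
  ∃ z : ZMod k → V, Function.Injective z ∧ (∀ i, A (z i) (z (i + 1))) ∧ ∃ i, z i = v

section Cycles

variable {V : Type*} {A : V → V → Prop}

lemma cycleThru_of_isChain {l : List V} (hnd : l.Nodup) (hch : l.IsChain A)
    (hclose : ∀ a ∈ l.getLast?, ∀ b ∈ l.head?, A a b) {v : V} (hv : v ∈ l) :
    CycleThru A l.length v := by
  obtain ⟨j, hj, rfl⟩ := List.mem_iff_getElem.mp hv
  have : NeZero l.length := ⟨by omega⟩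
  refine ⟨fun i => l[i.val]'i.val_lt, fun i i' h => ZMod.val_injective _ (hnd.getElem_inj_iff.mp h),
    fun i => ?_, j, by simp [ZMod.val_natCast_of_lt hj]⟩
  have hsucc : (i + 1).val = (i.val + 1) % l.length := by
    rw [ZMod.val_add, ZMod.val_one_eq_one_mod, Nat.add_mod_mod]
  have hi := i.val_lt
  by_cases hlt : i.val + 1 < l.length
  · simp only [hsucc, Nat.mod_eq_of_lt hlt]
    exact List.isChain_iff_getElem.mp hch _ hlt
  · have hlast : i.val = l.length - 1 := by omega
    simp only [hsucc, show i.val + 1 = l.length by omega, Nat.mod_self]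
    refine hclose _ ?_ _ ?_
    · simp [List.getLast?_eq_getElem?, hlast]
    · simp [List.head?_eq_getElem?]

lemma nodup_map_add_natCast {N : ℕ} {w : ZMod N → V} (hw : Function.Injective w) (s : ZMod N)
    {I : List ℕ} (hI : I.Nodup) (hIN : ∀ i ∈ I, i < N) :
    (I.map fun i : ℕ => w (s + i)).Nodup := by
  refine hI.map_on fun i hi j hj h => ?_
  have hij : (i : ZMod N) = j := add_left_cancel (hw h)
  rw [ZMod.natCast_eq_natCast_iff'] at hij
  rwa [Nat.mod_eq_of_lt (hIN i hi), Nat.mod_eq_of_lt (hIN j hj)] at hij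

def cycleSegment {N : ℕ} (w : ZMod N → V) (s : ZMod N) (i l : ℕ) : List V :=
  (List.range' i l).map fun t : ℕ => w (s + t)

variable {N : ℕ} (w : ZMod N → V) (s : ZMod N) (i l : ℕ)

@[simp] lemma length_cycleSegment : (cycleSegment w s i l).length = l := by
  simp [cycleSegment]

@[simp] lemma head?_cycleSegment : (cycleSegment w s i (l + 1)).head? = some (w (s + i)) := by
  simp [cycleSegment, List.head?_range']

@[simp] lemma getLast?_cycleSegment :
    (cycleSegment w s i (l + 1)).getLast? = some (w (s + (i + l : ℕ))) := by
  simp [cycleSegment, List.getLast?_range']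

lemma isChain_cycleSegment (hw : ∀ j, A (w j) (w (j + 1))) :
    (cycleSegment w s i l).IsChain A := by
  refine List.isChain_map _ |>.mpr <| (List.isChain_range' i l 1).imp fun a b hab => ?_
  simpa [hab, add_assoc] using hw (s + a)

end Cycles

structure DisjointCycles {V : Type*} (A : V → V → Prop) {n m : ℕ} (x : ZMod n → V)
    (y : ZMod m → V) : Prop where
  injective_left : Function.Injective x
  injective_right : Function.Injective y
  arc_left : ∀ i, A (x i) (x (i + 1))
  arc_right : ∀ i, A (y i) (y (i + 1))
  ne : ∀ s t, x s ≠ y t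

namespace DisjointCycles

variable {V : Type*} {A : V → V → Prop} {n m : ℕ} {x : ZMod n → V} {y : ZMod m → V}

lemma symm (hc : DisjointCycles A x y) : DisjointCycles A y x :=
  ⟨hc.injective_right, hc.injective_left, hc.arc_right, hc.arc_left, fun t s h => hc.ne s t h.symm⟩

lemma nodup_append_map (hc : DisjointCycles A x y) (s : ZMod n) (r : ZMod m)
    {I J : List ℕ} (hI : I.Nodup) (hJ : J.Nodup) (hIn : ∀ i ∈ I, i < n) (hJm : ∀ j ∈ J, j < m) :
    ((I.map fun i : ℕ => x (s + i)) ++ J.map fun j : ℕ => y (r + j)).Nodup := by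
  refine List.nodup_append.mpr ⟨nodup_map_add_natCast hc.injective_left s hI hIn,
    nodup_map_add_natCast hc.injective_right r hJ hJm, ?_⟩
  simp only [List.mem_map]
  rintro _ ⟨i, -, rfl⟩ _ ⟨j, -, rfl⟩
  exact hc.ne _ _

lemma cycleThru_two_arcs (hc : DisjointCycles A x y) {s : ZMod n} {r : ZMod m} {a b : ℕ}
    (ha : a < n) (hb : b < m) (hxy : A (x (s + a)) (y r)) (hyx : A (y (r + b)) (x s)) :
    CycleThru A (a + b + 2) (x s) := by
  have hlen : (cycleSegment x s 0 (a + 1) ++ cycleSegment y r 0 (b + 1)).length = a + b + 2 := by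
    simp; omega
  rw [← hlen]
  refine cycleThru_of_isChain ?_ ?_ ?_ (by simp [cycleSegment, List.range'_succ])
  · exact hc.nodup_append_map s r List.nodup_range' List.nodup_range'
      (by simp [List.mem_range']; omega) (by simp [List.mem_range']; omega)
  · exact List.isChain_append.mpr ⟨isChain_cycleSegment _ _ _ _ hc.arc_left,
      isChain_cycleSegment _ _ _ _ hc.arc_right, by simpa using hxy⟩
  · simpa using hyx

lemma cycleThru_four_arcs (hc : DisjointCycles A x y) {s : ZMod n} {r : ZMod m}
    {a₁ a₂ b₁ b₂ γ δ : ℕ} (hn : a₁ + γ + a₂ + 2 ≤ n) (hm : b₁ + δ + b₂ + 2 ≤ m)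
    (h₁ : A (x (s + a₁)) (y r))
    (h₂ : A (y (r + b₁)) (x (s + (a₁ + 1 + γ : ℕ))))
    (h₃ : A (x (s + (a₁ + 1 + γ + a₂ : ℕ))) (y (r + (b₁ + 1 + δ : ℕ))))
    (h₄ : A (y (r + (b₁ + 1 + δ + b₂ : ℕ))) (x s)) :
    CycleThru A (a₁ + a₂ + b₁ + b₂ + 4) (x s) := by
  set X₁ := cycleSegment x s 0 (a₁ + 1)
  set Y₁ := cycleSegment y r 0 (b₁ + 1)
  set X₂ := cycleSegment x s (a₁ + 1 + γ) (a₂ + 1)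
  set Y₂ := cycleSegment y r (b₁ + 1 + δ) (b₂ + 1)
  have hlen : (X₁ ++ Y₁ ++ X₂ ++ Y₂).length = a₁ + a₂ + b₁ + b₂ + 4 := by
    simp [X₁, Y₁, X₂, Y₂]; omega
  have hperm : (X₁ ++ Y₁ ++ X₂ ++ Y₂).Perm ((X₁ ++ X₂) ++ (Y₁ ++ Y₂)) := by
    simpa only [List.append_assoc] using (List.perm_append_comm_assoc Y₁ X₂ Y₂).append_left X₁
  rw [← hlen]
  refine cycleThru_of_isChain (hperm.nodup_iff.mpr ?_) ?_ ?_
    (by simp [X₁, cycleSegment, List.range'_succ])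
  · have hgap {i l j l' : ℕ} (h : i + l ≤ j) : (List.range' i l ++ List.range' j l').Nodup :=
      List.nodup_append.mpr ⟨List.nodup_range', List.nodup_range', by simp [List.mem_range']; omega⟩
    simp only [X₁, X₂, Y₁, Y₂, cycleSegment, ← List.map_append]
    exact hc.nodup_append_map s r (hgap (by omega)) (hgap (by omega))
      (by simp [List.mem_range']; omega) (by simp [List.mem_range']; omega)
  · have hX := fun i l => isChain_cycleSegment x s i l hc.arc_left
    have hY := fun i l => isChain_cycleSegment y r i l hc.arc_right
    refine List.isChain_append.mpr ⟨List.isChain_append.mpr ⟨List.isChain_append.mpr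
      ⟨hX _ _, hY _ _, by simpa [X₁, Y₁] using h₁⟩, hX _ _, by simpa [Y₁, X₂] using h₂⟩, hY _ _,
      by simpa [X₂, Y₂] using h₃⟩
  · simpa [X₁, Y₂] using h₄

end DisjointCycles

lemma Relation.ReflTransGen.exists_rel_of_mem_of_not_mem {α : Type*} {r : α → α → Prop}
    {S : Set α} {a b : α} (h : Relation.ReflTransGen r a b) (ha : a ∈ S) (hb : b ∉ S) :
    ∃ c ∈ S, ∃ d ∉ S, r c d := by
  induction h with
  | refl => exact absurd ha hb
  | @tail c d _ hcd ih =>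
    by_cases hc : c ∈ S
    · exact ⟨c, hc, d, hb, hcd⟩
    · exact ih hc

lemma exists_arc_of_reflTransGen {V : Type*} {A : V → V → Prop} {n m : ℕ} {x : ZMod n → V}
    {y : ZMod m → V} (hcov : ∀ v, (∃ s, x s = v) ∨ ∃ t, y t = v) (hne : ∀ s t, x s ≠ y t)
    {s : ZMod n} {t : ZMod m} (h : Relation.ReflTransGen A (x s) (y t)) :
    ∃ s r, A (x s) (y r) := by
  obtain ⟨_, ⟨s', rfl⟩, v, hv, hA⟩ :=
    h.exists_rel_of_mem_of_not_mem (Set.mem_range_self s) (by simpa using fun s' => hne s' t)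
  obtain ⟨s'', rfl⟩ | ⟨r, rfl⟩ := hcov v
  · exact absurd (Set.mem_range_self s'') hv
  · exact ⟨s', r, hA⟩

lemma ZMod.exists_and_not_add_one {g : ℕ} [NeZero g] {p : ZMod g → Prop} {a b : ZMod g}
    (ha : p a) (hb : ¬ p b) : ∃ c, p c ∧ ¬ p (c + 1) := by
  by_contra! h
  have hp : ∀ t : ℕ, p (a + t) := by
    intro t
    induction t with
    | zero => simpa using ha
    | succ t ih => simpa [add_assoc] using h _ ih
  exact hb (by simpa using hp (b - a).val)

lemma ZMod.exists_cast_add_cast_eq {n m g : ℕ} (hgm : g ∣ m) (s : ZMod n) (σ : ZMod g) :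
    ∃ r : ZMod m, ZMod.cast s + ZMod.cast r = σ := by
  obtain ⟨r, hr⟩ := ZMod.ringHom_surjective (ZMod.castHom hgm (ZMod g)) (σ - ZMod.cast s)
  rw [ZMod.castHom_apply] at hr
  exact ⟨r, by rw [hr]; ring⟩

section ShiftInvariance

variable {n m : ℕ} [NeZero n] [NeZero m]

lemma ZMod.exists_natCast_of_cast_add_eq {s s' : ZMod n} {r r' : ZMod m}
    (h : (ZMod.cast s + ZMod.cast r : ZMod (n.gcd m)) = ZMod.cast s' + ZMod.cast r') :
    ∃ t : ℕ, s' = s + t ∧ r' = r - t := by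
  have hgn := Nat.gcd_dvd_left n m
  have hgm := Nat.gcd_dvd_right n m
  have hmod : (s' - s).val ≡ (r - r').val [MOD n.gcd m] := by
    rw [← ZMod.natCast_eq_natCast_iff, ← ZMod.cast_eq_val, ← ZMod.cast_eq_val,
      ZMod.cast_sub hgn, ZMod.cast_sub hgm]
    linear_combination h.symm
  obtain ⟨t, hts, htr⟩ := Nat.chineseRemainder' hmod
  refine ⟨t, ?_, ?_⟩
  · rw [(ZMod.natCast_eq_natCast_iff _ _ _).mpr hts, ZMod.natCast_zmod_val]; ring
  · rw [(ZMod.natCast_eq_natCast_iff _ _ _).mpr htr, ZMod.natCast_zmod_val]; ring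

lemma exists_iff_cast_add_of_shift {P : ZMod n → ZMod m → Prop}
    (hP : ∀ s r, P s r → P (s + 1) (r - 1)) :
    ∃ f : ZMod (n.gcd m) → Prop, ∀ s r, P s r ↔ f (ZMod.cast s + ZMod.cast r) := by
  have hiter : ∀ (t : ℕ) s r, P s r → P (s + t) (r - t) := by
    intro t
    induction t with
    | zero => simp
    | succ t ih => intro s r h; simpa [add_assoc, sub_sub] using hP _ _ (ih s r h)
  refine ⟨fun w => ∃ s r, ZMod.cast s + ZMod.cast r = w ∧ P s r,
    fun s r => ⟨fun h => ⟨s, r, rfl, h⟩, ?_⟩⟩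
  rintro ⟨s', r', hsum, h⟩
  obtain ⟨t, rfl, rfl⟩ := ZMod.exists_natCast_of_cast_add_eq hsum
  exact hiter t s' r' h

end ShiftInvariance

lemma ZMod.exists_two_mul_natCast_eq {g : ℕ} [NeZero g] (w : ZMod g) :
    (∃ a < g, 2 * (a : ZMod g) = w) ∨ ∃ a, 2 * a < g ∧ 2 * (a : ZMod g) = w - 1 := by
  have hw := w.val_lt
  rw [← ZMod.natCast_zmod_val w]
  obtain ⟨j, hj | hj⟩ := Nat.even_or_odd' w.val
  · exact Or.inl ⟨j, by omega, by rw [hj]; push_cast; ring⟩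
  obtain ⟨h, hg | hg⟩ := Nat.even_or_odd' g
  · exact Or.inr ⟨j, by omega, by rw [hj]; push_cast; ring⟩
  · have hg0 : ((2 * h + 1 : ℕ) : ZMod g) = 0 := by rw [← hg]; exact ZMod.natCast_self g
    refine Or.inl ⟨j + h + 1, by omega, ?_⟩
    rw [hj]
    push_cast at hg0 ⊢
    linear_combination hg0

/-- `k` is the length of a cycle through `a + 1` consecutive vertices of an `n`-cycle followed by
`b + 1` of an `m`-cycle, or of one alternating twice between them with `a + 2` and `b + 2`
vertices on each; the congruences modulo `g` are those that let its crossing arcs sit at a fall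
and at a rise of the orientation predicate. -/
def AdmissibleLength (g n m k : ℕ) : Prop :=
  (∃ a b : ℕ, a + b + 2 = k ∧ a < n ∧ b < m ∧ ((b : ZMod g) = a + 1 ∨ (a : ZMod g) = b + 1)) ∨
    ∃ a b : ℕ, a + b + 4 = k ∧ a + 2 ≤ n ∧ b + 2 ≤ m ∧ (a : ZMod g) = b

namespace AdmissibleLength

variable {g n m k : ℕ}

lemma symm : AdmissibleLength g n m k → AdmissibleLength g m n k := by
  rintro (⟨a, b, hk, ha, hb, hab⟩ | ⟨a, b, hk, ha, hb, hab⟩)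
  · exact Or.inl ⟨b, a, by omega, hb, ha, hab.symm⟩
  · exact Or.inr ⟨b, a, by omega, hb, ha, hab.symm⟩

lemma of_le_add_one (hk : 3 ≤ k) (hkn : k ≤ n + 1) (hkm : k ≤ m + 1) :
    AdmissibleLength g n m k := by
  obtain ⟨j, rfl | rfl⟩ := Nat.even_or_odd' k
  · exact Or.inr ⟨j - 2, j - 2, by omega, by omega, by omega, rfl⟩
  · refine Or.inl ⟨j - 1, j, by omega, by omega, by omega, Or.inl ?_⟩
    rw [← Nat.cast_succ, Nat.succ_eq_add_one, Nat.sub_add_cancel (by omega)]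

lemma of_add_two_le (hgn : g ∣ n) (hgm : g ∣ m) (hkn : n + 2 ≤ k) (hkm : m + 2 ≤ k)
    (hk : k ≤ n + m) : AdmissibleLength g n m k := by
  have hn0 : (n : ZMod g) = 0 := (ZMod.natCast_eq_zero_iff n g).mpr hgn
  have hm0 : (m : ZMod g) = 0 := (ZMod.natCast_eq_zero_iff m g).mpr hgm
  obtain ⟨i, hi | hi⟩ := Nat.even_or_odd' (n + m - k)
  · obtain ⟨a, rfl⟩ : ∃ a, n = a + 2 + i := ⟨n - 2 - i, by omega⟩
    obtain ⟨b, rfl⟩ : ∃ b, m = b + 2 + i := ⟨m - 2 - i, by omega⟩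
    refine Or.inr ⟨a, b, by omega, by omega, by omega, ?_⟩
    push_cast at hn0 hm0
    linear_combination hn0 - hm0
  · obtain ⟨a, rfl⟩ : ∃ a, n = a + 2 + i := ⟨n - 2 - i, by omega⟩
    obtain ⟨b, rfl⟩ : ∃ b, m = b + 1 + i := ⟨m - 1 - i, by omega⟩
    refine Or.inl ⟨a, b, by omega, by omega, by omega, Or.inl ?_⟩
    push_cast at hn0 hm0
    linear_combination hm0 - hn0

lemma of_add_two_le_of_le_add_one (hgn : g ∣ n) (hn : 2 ≤ n) (hkn : n + 2 ≤ k)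
    (hkm : k ≤ m + 1) : AdmissibleLength g n m k := by
  have hg : 0 < g := Nat.pos_of_dvd_of_pos hgn (by omega)
  have : NeZero g := ⟨hg.ne'⟩
  have hgn' : g ≤ n := Nat.le_of_dvd (by omega) hgn
  rcases ZMod.exists_two_mul_natCast_eq (k - 3 : ZMod g) with ⟨a, ha, h2a⟩ | ⟨a, ha, h2a⟩
  · obtain ⟨b, hb⟩ : ∃ b, a + b + 2 = k := ⟨k - 2 - a, by omega⟩
    refine Or.inl ⟨a, b, hb, by omega, by omega, Or.inl ?_⟩
    have hbk := congrArg (Nat.cast : ℕ → ZMod g) hb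
    push_cast at hbk
    linear_combination hbk - h2a
  · obtain ⟨b, hb⟩ : ∃ b, a + b + 4 = k := ⟨k - 4 - a, by omega⟩
    refine Or.inr ⟨a, b, hb, by omega, by omega, ?_⟩
    have hbk := congrArg (Nat.cast : ℕ → ZMod g) hb
    push_cast at hbk
    linear_combination h2a - hbk

lemma of_three_le_of_le_add (hgn : g ∣ n) (hgm : g ∣ m) (hn : 2 ≤ n) (hm : 2 ≤ m)
    (hk : 3 ≤ k) (hknm : k ≤ n + m) : AdmissibleLength g n m k := by
  by_cases hsmall : k ≤ n + 1 ∧ k ≤ m + 1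
  · exact of_le_add_one hk hsmall.1 hsmall.2
  by_cases hlarge : n + 2 ≤ k ∧ m + 2 ≤ k
  · exact of_add_two_le hgn hgm hlarge.1 hlarge.2 hknm
  by_cases hkn : n + 2 ≤ k
  · exact of_add_two_le_of_le_add_one hgn hn hkn (by omega)
  · exact (of_add_two_le_of_le_add_one hgm hm (by omega) (by omega)).symm

end AdmissibleLength

def CrossArcsOrientedBy {V : Type*} (A : V → V → Prop) {n m g : ℕ} (x : ZMod n → V)
    (y : ZMod m → V) (f : ZMod g → Prop) : Prop :=
  ∀ s r, (f (ZMod.cast s + ZMod.cast r) → A (x s) (y r)) ∧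
    (¬ f (ZMod.cast s + ZMod.cast r) → A (y r) (x s))

namespace CrossArcsOrientedBy

variable {V : Type*} {A : V → V → Prop} {n m g : ℕ} {x : ZMod n → V} {y : ZMod m → V}
  {f : ZMod g → Prop}

lemma symm (ho : CrossArcsOrientedBy A x y f) : CrossArcsOrientedBy A y x (fun w => ¬ f w) :=
  fun t s => by simpa only [add_comm, not_not, and_comm] using ho s t

lemma cycleThru_two_arcs (ho : CrossArcsOrientedBy A x y f) (hc : DisjointCycles A x y)
    (hgn : g ∣ n) (hgm : g ∣ m) (s : ZMod n) {a b : ℕ} (ha : a < n) (hb : b < m) {σ : ZMod g}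
    (h₁ : f (σ + a)) (h₂ : ¬ f (σ + b)) :
    CycleThru A (a + b + 2) (x s) := by
  obtain ⟨r, rfl⟩ := ZMod.exists_cast_add_cast_eq hgm s σ
  refine hc.cycleThru_two_arcs (r := r) ha hb ((ho _ _).1 ?_) ((ho _ _).2 ?_)
  · rwa [ZMod.cast_add hgn, ZMod.cast_natCast hgn, add_right_comm]
  · rwa [ZMod.cast_add hgm, ZMod.cast_natCast hgm, ← add_assoc]

lemma cycleThru_four_arcs (ho : CrossArcsOrientedBy A x y f) (hc : DisjointCycles A x y)
    (hgn : g ∣ n) (hgm : g ∣ m) (s : ZMod n) {a₁ a₂ b₁ b₂ γ δ : ℕ}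
    (hn : a₁ + γ + a₂ + 2 ≤ n) (hm : b₁ + δ + b₂ + 2 ≤ m) {σ : ZMod g}
    (h₁ : f (σ + a₁)) (h₂ : ¬ f (σ + (a₁ + 1 + γ + b₁ : ℕ)))
    (h₃ : f (σ + (a₁ + 1 + γ + a₂ + b₁ + 1 + δ : ℕ))) (h₄ : ¬ f (σ + (b₁ + 1 + δ + b₂ : ℕ))) :
    CycleThru A (a₁ + a₂ + b₁ + b₂ + 4) (x s) := by
  obtain ⟨r, rfl⟩ := ZMod.exists_cast_add_cast_eq hgm s σ
  refine hc.cycleThru_four_arcs (r := r) hn hm ((ho _ _).1 ?_) ((ho _ _).2 ?_) ((ho _ _).1 ?_)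
    ((ho _ _).2 ?_)
  all_goals
    simp only [ZMod.cast_add hgn, ZMod.cast_add hgm, ZMod.cast_natCast hgn, ZMod.cast_natCast hgm]
  · convert h₁ using 1; ring
  · convert h₂ using 2; push_cast; ring
  · convert h₃ using 1; push_cast; ring
  · convert h₄ using 2; ring

lemma cycleThru_add_four (ho : CrossArcsOrientedBy A x y f) (hc : DisjointCycles A x y)
    (hgn : g ∣ n) (hgm : g ∣ m) {c d : ZMod g} (hc₁ : f c) (hc₂ : ¬ f (c + 1)) (hd₁ : ¬ f d)
    (hd₂ : f (d + 1)) {a b : ℕ} (ha : a + 2 ≤ n) (hb : b + 2 ≤ m) (hab : (a : ZMod g) = b)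
    (s : ZMod n) : CycleThru A (a + b + 4) (x s) := by
  have hg : 0 < g := Nat.pos_of_dvd_of_pos hgn (by omega)
  have : NeZero g := ⟨hg.ne'⟩
  have hgn' : g ≤ n := Nat.le_of_dvd (by omega) hgn
  have hgm' : g ≤ m := Nat.le_of_dvd (by omega) hgm
  -- Crossing at both the fall `c` and the rise `d` takes `e ≡ d - c - 1` extra steps between the
  -- two crossings, made by the second segment on `C₁` plus a gap on `C₂`, or by the first
  -- segment on `C₂` plus a gap on `C₁`; one of the two has room as `e ≤ g - 2 ≤ min n m - 2`.
  set e := (d - c - 1).val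
  have he : (e : ZMod g) = d - c - 1 := ZMod.natCast_zmod_val _
  have he_lt : e < g := ZMod.val_lt _
  have he_ne : e ≠ g - 1 := by
    intro h
    have hg1 : ((g - 1 : ℕ) : ZMod g) = -1 := by rw [Nat.cast_sub hg, ZMod.natCast_self]; ring
    rw [h] at he
    exact hd₁ (by convert hc₁ using 1; linear_combination hg1 - he)
  by_cases hroom : e ≤ a + (m - 2 - b)
  · obtain ⟨a₂, δ, ha₂, hδ, hsum⟩ : ∃ a₂ δ, a₂ ≤ a ∧ δ + b + 2 ≤ m ∧ a₂ + δ = e :=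
      ⟨e - min e (m - 2 - b), min e (m - 2 - b), by omega, by omega, by omega⟩
    obtain ⟨a₁, rfl⟩ : ∃ a₁, a = a₁ + a₂ := ⟨a - a₂, by omega⟩
    have hsum' : (a₂ : ZMod g) + δ = d - c - 1 := by rw [← he, ← hsum]; push_cast; ring
    push_cast at hab
    have := ho.cycleThru_four_arcs hc hgn hgm s (a₁ := a₁) (a₂ := a₂) (b₁ := 0) (b₂ := b) (γ := 0)
      (δ := δ) (σ := c - a₁) (by omega) (by omega) (by simpa using hc₁)
      (by convert hc₂ using 2; push_cast; ring)
      (by convert hd₂ using 1; push_cast; linear_combination hsum')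
      (by convert hd₁ using 2; push_cast; linear_combination hsum' - hab)
    simpa using this
  · obtain ⟨b₁, γ, hb₁, hγ, hsum⟩ : ∃ b₁ γ, b₁ ≤ b ∧ γ + a + 2 ≤ n ∧ b₁ + γ = e :=
      ⟨e - min e (n - 2 - a), min e (n - 2 - a), by omega, by omega, by omega⟩
    obtain ⟨b₂, rfl⟩ : ∃ b₂, b = b₁ + b₂ := ⟨b - b₁, by omega⟩
    have hsum' : (b₁ : ZMod g) + γ = d - c - 1 := by rw [← he, ← hsum]; push_cast; ring
    push_cast at hab
    have := ho.cycleThru_four_arcs hc hgn hgm s (a₁ := a) (a₂ := 0) (b₁ := b₁) (b₂ := b₂) (γ := γ)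
      (δ := 0) (σ := c - a) (by omega) (by omega) (by simpa using hc₁)
      (by convert hd₁ using 2; push_cast; linear_combination hsum')
      (by convert hd₂ using 1; push_cast; linear_combination hsum')
      (by convert hc₂ using 2; push_cast; linear_combination -hab)
    simpa [add_assoc] using this

lemma cycleThru_of_admissibleLength (ho : CrossArcsOrientedBy A x y f)
    (hc : DisjointCycles A x y) (hgn : g ∣ n) (hgm : g ∣ m) {c d : ZMod g} (hc₁ : f c)
    (hc₂ : ¬ f (c + 1)) (hd₁ : ¬ f d) (hd₂ : f (d + 1)) {k : ℕ} (hk : AdmissibleLength g n m k)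
    (s : ZMod n) : CycleThru A k (x s) := by
  rcases hk with ⟨a, b, rfl, ha, hb, hab | hab⟩ | ⟨a, b, rfl, ha, hb, hab⟩
  · exact ho.cycleThru_two_arcs hc hgn hgm s ha hb (σ := c - a) (by simpa using hc₁)
      (by convert hc₂ using 2; rw [hab]; ring)
  · exact ho.cycleThru_two_arcs hc hgn hgm s ha hb (σ := d - b)
      (by convert hd₂ using 1; rw [hab]; ring) (by simpa using hd₁)
  · exact ho.cycleThru_add_four hc hgn hgm hc₁ hc₂ hd₁ hd₂ ha hb hab s

lemma cycleThru_of_le_add (ho : CrossArcsOrientedBy A x y f) (hc : DisjointCycles A x y)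
    (hn : 2 ≤ n) (hm : 2 ≤ m) (hgn : g ∣ n) (hgm : g ∣ m) {e₁ e₂ : ZMod g} (h₁ : f e₁)
    (h₂ : ¬ f e₂) {k : ℕ} (hk : 3 ≤ k) (hknm : k ≤ n + m) (s : ZMod n) :
    CycleThru A k (x s) := by
  have : NeZero g := ⟨(Nat.pos_of_dvd_of_pos hgn (by omega)).ne'⟩
  obtain ⟨c, hc₁, hc₂⟩ := ZMod.exists_and_not_add_one h₁ h₂
  obtain ⟨d, hd₁, hd₂⟩ := ZMod.exists_and_not_add_one (p := fun w => ¬ f w) h₂ (not_not_intro h₁)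
  exact ho.cycleThru_of_admissibleLength hc hgn hgm hc₁ hc₂ hd₁ (not_not.mp hd₂)
    (AdmissibleLength.of_three_le_of_le_add hgn hgm hn hm hk hknm) s

end CrossArcsOrientedBy

/-- A strong generalized sum of two Hamiltonian digraphs with no good pair
is vertex-pancyclic. -/
theorem stmt6 {V : Type*} [Fintype V] (A : V → V → Prop) {n m : ℕ}
    (hn : 2 ≤ n) (hm : 2 ≤ m)
    (x : ZMod n → V) (y : ZMod m → V)
    (hxinj : Function.Injective x) (hyinj : Function.Injective y)
    (hxcyc : ∀ i, A (x i) (x (i + 1))) (hycyc : ∀ i, A (y i) (y (i + 1)))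
    (hdisj : ∀ s t, x s ≠ y t)
    (hcov : ∀ v : V, (∃ s, x s = v) ∨ (∃ t, y t = v))
    (hone : ∀ s t, Xor' (A (x s) (y t)) (A (y t) (x s)))
    (hstrong : ∀ u v : V, u ≠ v → Relation.ReflTransGen A u v)
    (hngp : ¬ ∃ (s : ZMod n) (r : ZMod m), A (x s) (y r) ∧ A (y (r - 1)) (x (s + 1))) :
    ∀ v : V, ∀ k : ℕ, 3 ≤ k → k ≤ Fintype.card V → CycleThru A k v := by
  have : NeZero n := ⟨by omega⟩
  have : NeZero m := ⟨by omega⟩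
  have hc : DisjointCycles A x y := ⟨hxinj, hyinj, hxcyc, hycyc, hdisj⟩
  have hxor : ∀ s r, A (x s) (y r) ↔ ¬ A (y r) (x s) := fun s r => xor_iff_iff_not.mp (hone s r)
  have hshift : ∀ s r, A (x s) (y r) → A (x (s + 1)) (y (r - 1)) := fun s r h =>
    (hxor _ _).mpr fun h' => hngp ⟨s, r, h, h'⟩
  obtain ⟨f, hf⟩ := exists_iff_cast_add_of_shift hshift
  have ho : CrossArcsOrientedBy A x y f := fun s r =>
    ⟨(hf s r).mpr, fun h => not_not.mp (mt (hxor s r).mpr (mt (hf s r).mp h))⟩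
  obtain ⟨s₁, r₁, h₁⟩ := exists_arc_of_reflTransGen hcov hdisj (hstrong _ _ (hdisj 0 0))
  obtain ⟨r₂, s₂, h₂⟩ := exists_arc_of_reflTransGen (fun v => (hcov v).symm) hc.symm.ne
    (hstrong _ _ (hdisj 0 0).symm)
  have hcard : Fintype.card V ≤ n + m := by
    simpa using Fintype.card_le_of_surjective (Sum.elim x y) fun v => by
      rcases hcov v with ⟨s, rfl⟩ | ⟨t, rfl⟩
      exacts [⟨.inl s, rfl⟩, ⟨.inr t, rfl⟩]
  have hf₁ : f (ZMod.cast s₁ + ZMod.cast r₁) := (hf s₁ r₁).mp h₁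
  have hf₂ : ¬ f (ZMod.cast s₂ + ZMod.cast r₂) := mt (hf s₂ r₂).mpr ((hxor s₂ r₂).not_left.mpr h₂)
  intro v k hk hkV
  have hgn := Nat.gcd_dvd_left n m
  have hgm := Nat.gcd_dvd_right n m
  rcases hcov v with ⟨s, rfl⟩ | ⟨t, rfl⟩
  · exact ho.cycleThru_of_le_add hc hn hm hgn hgm hf₁ hf₂ hk (hkV.trans hcard) s
  · exact ho.symm.cycleThru_of_le_add hc.symm hm hn hgm hgn hf₂ (not_not_intro hf₁) hk
      (by omega) t
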